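/- Define φ(y,s) = f(y/√s) + 1/(4s) with f(z) = 8/(8+z^2), and R(y,s) = ∂_y^2 φ − (y/2)∂_y φ − φ + φ^2 − ∂_s φ. Then there exists C > 0 such that for all s ≥ 1, ‖R(·,s)‖_{L^∞(ℝ)} ≤ C/s. -/

import Mathlib

/-!
For `s > 0` the profile is the rational function `φ(y,s) = 8s/(8s+y²) + 1/(4s)`, so every
derivative in `R` is explicit and `R(y,s) = N(s,y²) / (16 s² (8s+y²)³)` for a polynomial `N`.
Bounding each monomial of `N` for `s ≥ 1` gives `|N| ≤ 16 s (8s+y²)³`, i.e. `|R| ≤ 1/s`.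
-/

open Filter Topology

lemma div_add_div_sqrt_sq {a s : ℝ} (ha : 0 < a) (hs : 0 < s) (y : ℝ) :
    a / (a + (y / √s) ^ 2) = a * s / (a * s + y ^ 2) := by
  rw [div_pow, Real.sq_sqrt hs.le]
  have : a * s + y ^ 2 ≠ 0 := by positivity
  field_simp [hs.ne']

lemma hasDerivAt_div_const_add_sq (c : ℝ) {a : ℝ} (ha : 0 < a) (t : ℝ) :
    HasDerivAt (fun t => c / (a + t ^ 2)) (-2 * c * t / (a + t ^ 2) ^ 2) t := by
  have hden : HasDerivAt (fun t => a + t ^ 2) (2 * t) t := by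
    simpa using (hasDerivAt_pow 2 t).const_add a
  refine ((hasDerivAt_const t c).fun_div hden (by positivity)).congr_deriv ?_
  ring

lemma hasDerivAt_mul_div_const_add_sq_sq (c : ℝ) {a : ℝ} (ha : 0 < a) (t : ℝ) :
    HasDerivAt (fun t => c * t / (a + t ^ 2) ^ 2) (c * (a - 3 * t ^ 2) / (a + t ^ 2) ^ 3) t := by
  have hden : HasDerivAt (fun t => (a + t ^ 2) ^ 2) (2 * (a + t ^ 2) * (2 * t)) t := by
    simpa using ((hasDerivAt_pow 2 t).const_add a).fun_pow 2
  have hnum : HasDerivAt (fun t => c * t) c t := by simpa using (hasDerivAt_id t).const_mul c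
  have : a + t ^ 2 ≠ 0 := by positivity
  refine (hnum.fun_div hden (by positivity)).congr_deriv ?_
  field_simp
  ring

lemma hasDerivAt_mul_div_mul_add (b k : ℝ) {s : ℝ} (h : b * s + k ≠ 0) :
    HasDerivAt (fun s => b * s / (b * s + k)) (b * k / (b * s + k) ^ 2) s := by
  have hnum : HasDerivAt (fun s => b * s) b s := by simpa using (hasDerivAt_id s).const_mul b
  refine (hnum.fun_div (hnum.add_const k) h).congr_deriv ?_
  ring

lemma hasDerivAt_one_div_const_mul {c s : ℝ} (hc : c ≠ 0) (hs : s ≠ 0) :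
    HasDerivAt (fun s => 1 / (c * s)) (-1 / (c * s ^ 2)) s := by
  have hden : HasDerivAt (fun s => c * s) c s := by simpa using (hasDerivAt_id s).const_mul c
  refine ((hasDerivAt_const s 1).fun_div hden (mul_ne_zero hc hs)).congr_deriv ?_
  field_simp
  ring

/-- The closed form of `R(y,s)`, with `u = y²`. -/
lemma abs_residual_closed_form_le {s u : ℝ} (hs : 1 ≤ s) (hu : 0 ≤ u) :
    |(5 * u ^ 3 + 120 * s * u ^ 2 - 4 * s * u ^ 3 + 960 * s ^ 2 * u - 160 * s ^ 2 * u ^ 2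
      + 2560 * s ^ 3) / (16 * s ^ 2 * (8 * s + u) ^ 3)| ≤ 1 / s := by
  have hs0 : 0 < s := by linarith
  have hden : 0 < 16 * s ^ 2 * (8 * s + u) ^ 3 := by positivity
  have hnum : |5 * u ^ 3 + 120 * s * u ^ 2 - 4 * s * u ^ 3 + 960 * s ^ 2 * u - 160 * s ^ 2 * u ^ 2
      + 2560 * s ^ 3| ≤ 16 * s * (8 * s + u) ^ 3 := by
    have h1 : 0 ≤ s - 1 := by linarith
    rw [abs_le]
    constructor <;> nlinarith [mul_nonneg (mul_nonneg hu hu) (mul_nonneg hu h1),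
      mul_nonneg (mul_nonneg hu hu) (mul_nonneg hs0.le h1),
      mul_nonneg (mul_nonneg hu hs0.le) (mul_nonneg hs0.le h1),
      mul_nonneg (pow_nonneg hs0.le 3) h1, mul_nonneg (mul_nonneg hu hu) (mul_nonneg hu hs0.le),
      mul_nonneg (mul_nonneg hu hu) (mul_nonneg hs0.le hs0.le),
      mul_nonneg (mul_nonneg hu hs0.le) (mul_nonneg hs0.le hs0.le), pow_nonneg hs0.le 4]
  calc _ ≤ 16 * s * (8 * s + u) ^ 3 / (16 * s ^ 2 * (8 * s + u) ^ 3) := by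
        rw [abs_div, abs_of_pos hden]; gcongr
    _ = 1 / s := by field_simp

theorem stmt13 (f : ℝ → ℝ) (φ R : ℝ → ℝ → ℝ)
    (hf : ∀ z, f z = 8 / (8 + z ^ 2))
    (hφ : ∀ y s, φ y s = f (y / Real.sqrt s) + 1 / (4 * s))
    (hR : ∀ y s, R y s =
      deriv (deriv (fun y' => φ y' s)) y - (y / 2) * deriv (fun y' => φ y' s) y
        - φ y s + (φ y s) ^ 2 - deriv (fun s' => φ y s') s) :
    ∃ C > (0 : ℝ), ∀ s ≥ (1 : ℝ), ∀ y : ℝ, |R y s| ≤ C / s := by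
  refine ⟨1, one_pos, fun s hs y => ?_⟩
  have hs0 : 0 < s := by linarith
  have h8s : 0 < 8 * s := by positivity
  have hφ_eq : ∀ y' s', 0 < s' → φ y' s' = 8 * s' / (8 * s' + y' ^ 2) + 1 / (4 * s') :=
    fun y' s' hs' => by rw [hφ, hf, div_add_div_sqrt_sq (by norm_num) hs']
  have hφ_y : deriv (fun y' => φ y' s) = fun t => -2 * (8 * s) * t / (8 * s + t ^ 2) ^ 2 := by
    funext t
    simp_rw [hφ_eq _ s hs0]
    exact ((hasDerivAt_div_const_add_sq _ h8s t).add_const _).deriv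
  have hφ_yy : deriv (deriv (fun y' => φ y' s)) y
      = -2 * (8 * s) * (8 * s - 3 * y ^ 2) / (8 * s + y ^ 2) ^ 3 := by
    rw [hφ_y]; exact (hasDerivAt_mul_div_const_add_sq_sq _ h8s y).deriv
  have hφ_s : deriv (fun s' => φ y s') s
      = 8 * y ^ 2 / (8 * s + y ^ 2) ^ 2 + -1 / (4 * s ^ 2) := by
    have hloc : (fun s' => φ y s') =ᶠ[𝓝 s] fun s' => 8 * s' / (8 * s' + y ^ 2) + 1 / (4 * s') := by
      filter_upwards [eventually_gt_nhds hs0] with s' hs' using hφ_eq y s' hs'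
    rw [hloc.deriv_eq]
    exact ((hasDerivAt_mul_div_mul_add 8 (y ^ 2) (by positivity)).add
      (hasDerivAt_one_div_const_mul (by norm_num) hs0.ne')).deriv
  have hclosed := abs_residual_closed_form_le hs (sq_nonneg y)
  rw [hR, hφ_yy, hφ_y, hφ_s, hφ_eq y s hs0]
  convert hclosed using 2
  have : 8 * s + y ^ 2 ≠ 0 := by positivity
  field_simp
  ring
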